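/- arXiv:2012.13706 — 7 statements merged into one kernel-verified Lean document; each statement's English description precedes it below -/
import Mathlib

section
/- Code-Anticode Bound: Let V be a finite set with a translation-invariant distance on an abelian group structure, d ≥ 1, C ⊆ V a set with pairwise distances ≥ d, and A ⊆ V a nonempty set with pairwise distances ≤ d−1. Then |C|·|A| ≤ |V|. -/
/-! The map `(c, a) ↦ c - a` is injective on `C × A`: if `c₁ - a₁ = c₂ - a₂`, translation
invariance gives `dist c₁ c₂ = dist a₁ a₂`, which is `≥ d` unless `c₁ = c₂` and `≤ d - 1`
always. Hence `|C| |A| ≤ |V|`. -/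

section

variable {V : Type*} [AddCommGroup V]

theorem Finset.card_mul_card_le_of_sub_eq_sub [Fintype V] {C A : Finset V}
    (h : ∀ c₁ ∈ C, ∀ c₂ ∈ C, ∀ a₁ ∈ A, ∀ a₂ ∈ A, c₁ - a₁ = c₂ - a₂ → c₁ = c₂) :
    C.card * A.card ≤ Fintype.card V := by
  rw [← Finset.card_product, ← Finset.card_univ]
  refine Finset.card_le_card_of_injOn (fun p => p.1 - p.2) (fun _ _ => Finset.mem_univ _) ?_
  rintro ⟨c₁, a₁⟩ hp₁ ⟨c₂, a₂⟩ hp₂ (hsub : c₁ - a₁ = c₂ - a₂)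
  obtain ⟨hc₁, ha₁⟩ := Finset.mem_product.mp hp₁
  obtain ⟨hc₂, ha₂⟩ := Finset.mem_product.mp hp₂
  obtain rfl : c₁ = c₂ := h c₁ hc₁ c₂ hc₂ a₁ ha₁ a₂ ha₂ hsub
  rw [sub_right_injective hsub]

theorem dist_eq_of_sub_eq_sub {β : Type*} (dist : V → V → β)
    (hinv : ∀ x y z : V, dist (x + z) (y + z) = dist x y) {c₁ c₂ a₁ a₂ : V}
    (h : c₁ - a₁ = c₂ - a₂) : dist c₁ c₂ = dist a₁ a₂ := by
  have hc₁ : c₁ = a₁ + (c₁ - a₁) := by abel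
  have hc₂ : c₂ = a₂ + (c₁ - a₁) := by rw [h]; abel
  rw [hc₁, hc₂, hinv]

end

theorem code_anticode_bound_general {V : Type*} [AddCommGroup V] [Fintype V]
    (dist : V → V → ℝ)
    (hinv : ∀ x y z : V, dist (x + z) (y + z) = dist x y)
    (d : ℕ) (C A : Finset V)
    (hC : ∀ X ∈ C, ∀ Y ∈ C, X ≠ Y → (d : ℝ) ≤ dist X Y)
    (hAd : ∀ X ∈ A, ∀ Y ∈ A, dist X Y ≤ (d : ℝ) - 1) :
    C.card * A.card ≤ Fintype.card V := by
  refine Finset.card_mul_card_le_of_sub_eq_sub fun c₁ hc₁ c₂ hc₂ a₁ ha₁ a₂ ha₂ hsub => ?_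
  by_contra hne
  have hcode := hC c₁ hc₁ c₂ hc₂ hne
  have hanticode := hAd a₁ ha₁ a₂ ha₂
  rw [dist_eq_of_sub_eq_sub dist hinv hsub] at hcode
  linarith

/-- Code-Anticode Bound: in a finite abelian group V with a translation-invariant
distance, if C has pairwise distances ≥ d and A is nonempty with pairwise distances
≤ d − 1, then |C|·|A| ≤ |V|. -/
theorem code_anticode_bound {V : Type*} [AddCommGroup V] [Fintype V]
    (dist : V → V → ℝ)
    (hinv : ∀ x y z : V, dist (x + z) (y + z) = dist x y)
    (d : ℕ) (hd : 1 ≤ d) (C A : Finset V) (hA : A.Nonempty)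
    (hC : ∀ X ∈ C, ∀ Y ∈ C, X ≠ Y → (d : ℝ) ≤ dist X Y)
    (hAd : ∀ X ∈ A, ∀ Y ∈ A, dist X Y ≤ (d : ℝ) - 1) :
    C.card * A.card ≤ Fintype.card V :=
  code_anticode_bound_general dist hinv d C A hC hAd
end

section
/- In the graph Γ(Π) on the vertex set Π = ⊕_{i=1}^t F^{n_i × m_i} where X and Y are adjacent iff srk(X − Y) = 1, the geodesic (path-length) distance between any two vertices X and Y equals srk(X − Y). -/
/-!
Sum-rank vanishes at `0`, is invariant under negation and is subadditive, so `srk (X - Y)` is at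
most the length of any walk from `X` to `Y`. Conversely, if `A ≠ 0` and `φ (A v) = 1` for a linear
form `φ`, subtracting the rank-one map `x ↦ φ (A x) • A v` sends the range of `A` into the proper
subspace `range A ⊓ ker φ`, so the rank drops. Doing this in one block at a time walks from `X` to
`Y` in `srk (X - Y)` steps.
-/

/-- The sum-rank of a tuple of matrices. -/
noncomputable def srk {F : Type*} [Field F] {t : ℕ} {n m : Fin t → ℕ}
    (X : ∀ i : Fin t, Matrix (Fin (n i)) (Fin (m i)) F) : ℕ :=
  ∑ i, (X i).rank

open Module

namespace LinearMap

variable {K V W : Type*} [Field K] [AddCommGroup V] [Module K V] [AddCommGroup W] [Module K W]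

theorem finrank_range_add_le [FiniteDimensional K W] (f g : V →ₗ[K] W) :
    finrank K (range (f + g)) ≤ finrank K (range f) + finrank K (range g) :=
  (Submodule.finrank_mono (range_add_le f g)).trans
    (Submodule.finrank_add_le_finrank_add_finrank _ _)

theorem exists_finrank_range_le_one_sub_lt [FiniteDimensional K W] {f : V →ₗ[K] W} (hf : f ≠ 0) :
    ∃ g : V →ₗ[K] W, finrank K (range g) ≤ 1 ∧
      finrank K (range (f - g)) < finrank K (range f) := by
  obtain ⟨v, hv⟩ : ∃ v, f v ≠ 0 := by
    by_contra! h
    exact hf (ext h)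
  obtain ⟨φ, hφ⟩ := Projective.exists_dual_eq_one K hv
  refine ⟨(φ ∘ₗ f).smulRight (f v), ?_, ?_⟩
  · calc finrank K (range ((φ ∘ₗ f).smulRight (f v))) ≤ finrank K (K ∙ f v) := by
          refine Submodule.finrank_mono ?_
          rintro _ ⟨x, rfl⟩
          exact Submodule.smul_mem _ _ (Submodule.mem_span_singleton_self _)
      _ = 1 := finrank_span_singleton hv
  · have hle : range (f - (φ ∘ₗ f).smulRight (f v)) ≤ range f ⊓ ker φ := by
      rintro _ ⟨x, rfl⟩
      refine ⟨⟨x - φ (f x) • v, by simp⟩, by simp [hφ]⟩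
    have hlt : range f ⊓ ker φ < range f :=
      inf_lt_left.2 fun h => by simpa [hφ] using h ⟨v, rfl⟩
    exact (Submodule.finrank_mono hle).trans_lt (Submodule.finrank_lt_finrank_of_lt hlt)

end LinearMap

namespace Matrix

variable {K : Type*} [Field K] {m n : Type*} [Fintype n]

theorem rank_eq_finrank_range_toLin' [DecidableEq n] (A : Matrix m n K) :
    A.rank = finrank K (LinearMap.range (toLin' A)) := by
  rw [toLin'_apply', rank]

theorem rank_neg (A : Matrix m n K) : (-A).rank = A.rank := by
  classical
  rw [rank_eq_finrank_range_toLin', rank_eq_finrank_range_toLin', map_neg, LinearMap.range_neg]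

theorem rank_add_le [Finite m] (A B : Matrix m n K) : (A + B).rank ≤ A.rank + B.rank := by
  classical
  rw [rank_eq_finrank_range_toLin', rank_eq_finrank_range_toLin', rank_eq_finrank_range_toLin',
    map_add]
  exact LinearMap.finrank_range_add_le _ _

theorem exists_rank_le_one_sub_lt [Finite m] {A : Matrix m n K} (hA : A ≠ 0) :
    ∃ R : Matrix m n K, R.rank ≤ 1 ∧ (A - R).rank < A.rank := by
  classical
  obtain ⟨g, hg, hlt⟩ :=
    LinearMap.exists_finrank_range_le_one_sub_lt ((LinearEquiv.map_ne_zero_iff toLin').2 hA)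
  refine ⟨LinearMap.toMatrix' g, ?_, ?_⟩
  · rwa [rank_eq_finrank_range_toLin', toLin'_toMatrix']
  · rwa [rank_eq_finrank_range_toLin', rank_eq_finrank_range_toLin', map_sub, toLin'_toMatrix']

end Matrix

namespace SimpleGraph

variable {G : Type*} [AddCommGroup G] {w : G → ℕ}

theorem le_length_of_walk_fromRel_sub (hzero : w 0 = 0) (hneg : ∀ x, w (-x) = w x)
    (hadd : ∀ x y, w (x + y) ≤ w x + w y) {a b : G}
    (p : (fromRel fun a b => w (a - b) = 1).Walk a b) : w (a - b) ≤ p.length := by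
  induction p with
  | nil => simp [hzero]
  | @cons a c b hadj p ih =>
    have hac : w (a - c) = 1 := by
      rcases hadj.2 with h | h
      · exact h
      · rw [← hneg, neg_sub]
        exact h
    calc w (a - b) = w ((a - c) + (c - b)) := by rw [sub_add_sub_cancel]
      _ ≤ 1 + p.length := by
        have := hadd (a - c) (c - b)
        omega
      _ = (p.cons hadj).length := by rw [Walk.length_cons, add_comm]

theorem exists_walk_fromRel_sub_length_le (hadd : ∀ x y, w (x + y) ≤ w x + w y)
    (hstep : ∀ x ≠ 0, ∃ y, w y ≤ 1 ∧ w (x - y) < w x) (a b : G) :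
    ∃ p : (fromRel fun a b => w (a - b) = 1).Walk a b, p.length ≤ w (a - b) := by
  induction hk : w (a - b) using Nat.strong_induction_on generalizing a with
  | _ k ih =>
    by_cases hab : a = b
    · subst hab
      exact ⟨Walk.nil, by simp⟩
    obtain ⟨y, hy, hlt⟩ := hstep (a - b) (sub_ne_zero.2 hab)
    have hy1 : w y = 1 := by
      have := hadd (a - b - y) y
      rw [sub_add_cancel] at this
      omega
    have hne : a ≠ a - y := fun h => by
      rw [sub_eq_self.1 h.symm, sub_zero] at hlt
      exact hlt.false
    obtain ⟨p, hp⟩ := ih _ (hk ▸ hlt) (a - y) (by rw [sub_right_comm])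
    refine ⟨.cons ((fromRel_adj _ _ _).2 ⟨hne, .inl (by rwa [sub_sub_cancel])⟩) p, ?_⟩
    rw [Walk.length_cons]
    omega

theorem dist_fromRel_sub (hzero : w 0 = 0) (hneg : ∀ x, w (-x) = w x)
    (hadd : ∀ x y, w (x + y) ≤ w x + w y) (hstep : ∀ x ≠ 0, ∃ y, w y ≤ 1 ∧ w (x - y) < w x)
    (a b : G) : (fromRel fun a b => w (a - b) = 1).dist a b = w (a - b) := by
  obtain ⟨p, hp⟩ := exists_walk_fromRel_sub_length_le hadd hstep a b
  obtain ⟨q, hq⟩ := Reachable.exists_walk_length_eq_dist ⟨p⟩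
  exact le_antisymm ((dist_le p).trans hp) (hq ▸ le_length_of_walk_fromRel_sub hzero hneg hadd q)

end SimpleGraph

section SumRank

variable {F : Type*} [Field F] {t : ℕ} {n m : Fin t → ℕ}

theorem srk_zero : srk (0 : ∀ i : Fin t, Matrix (Fin (n i)) (Fin (m i)) F) = 0 := by
  simp [srk]

theorem srk_neg (X : ∀ i : Fin t, Matrix (Fin (n i)) (Fin (m i)) F) : srk (-X) = srk X :=
  Finset.sum_congr rfl fun i _ => Matrix.rank_neg (X i)

theorem srk_add_le (X Y : ∀ i : Fin t, Matrix (Fin (n i)) (Fin (m i)) F) :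
    srk (X + Y) ≤ srk X + srk Y :=
  (Finset.sum_le_sum fun i _ => Matrix.rank_add_le (X i) (Y i)).trans_eq Finset.sum_add_distrib

theorem srk_single (i : Fin t) (A : Matrix (Fin (n i)) (Fin (m i)) F) :
    srk (Pi.single i A : ∀ i : Fin t, Matrix (Fin (n i)) (Fin (m i)) F) = A.rank := by
  rw [srk, Finset.sum_eq_single i (fun j _ hj => by rw [Pi.single_eq_of_ne hj, Matrix.rank_zero])
    (by simp), Pi.single_eq_same]

theorem exists_srk_le_one_sub_lt {X : ∀ i : Fin t, Matrix (Fin (n i)) (Fin (m i)) F}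
    (hX : X ≠ 0) : ∃ Y, srk Y ≤ 1 ∧ srk (X - Y) < srk X := by
  obtain ⟨i, hi⟩ := Function.ne_iff.1 hX
  obtain ⟨R, hR, hlt⟩ := Matrix.exists_rank_le_one_sub_lt hi
  refine ⟨Pi.single i R, (srk_single i R).trans_le hR, Finset.sum_lt_sum (fun j _ => ?_)
    ⟨i, Finset.mem_univ i, by simpa using hlt⟩⟩
  obtain rfl | hj := eq_or_ne j i
  · simpa using hlt.le
  · simp [Pi.single_eq_of_ne hj]

end SumRank

/-- In the graph on Π = ⊕ F^{n_i × m_i} where X and Y are adjacent iff srk(X − Y) = 1,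
the geodesic (path-length) distance between any two vertices equals srk(X − Y). -/
theorem geodesic_dist_eq_srk {F : Type*} [Field F] {t : ℕ} {n m : Fin t → ℕ}
    (X Y : ∀ i : Fin t, Matrix (Fin (n i)) (Fin (m i)) F) :
    (SimpleGraph.fromRel (fun A B => srk (A - B) = 1)).dist X Y = srk (X - Y) :=
  SimpleGraph.dist_fromRel_sub srk_zero srk_neg srk_add_le
    (fun _ => exists_srk_le_one_sub_lt) X Y
end

section
/- Characterization of maximizers: with notation as in the maximization lemma, let ℓ, ℓ' be the unique indices with m_1 ≥ … ≥ m_{ℓ−1} > m_ℓ = … = m_j = … = m_{ℓ'} > m_{ℓ'+1} ≥ … ≥ m_t. A tuple u ∈ U_r achieves Σ m_i u_i = K := Σ_{i<j} m_i n_i + m_j δ if and only if u_i = n_i for i < ℓ, u_i = 0 for i > ℓ', and Σ_{i=ℓ}^{ℓ'} u_i = Σ_{i=ℓ}^{j−1} n_i + δ. -/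
/-!
Compare `u` with the greedy filling `aᵢ = nᵢ` for `i < j` (and `0` otherwise), which has the
same total up to `δ`. Subtracting `m j` times the two (equal) totals gives
`K - ∑ mᵢ uᵢ = ∑ᵢ (mᵢ - m_j) (aᵢ - uᵢ)`. Every term is nonnegative: for `i < ℓ` both factors are
`≥ 0`, for `ℓ ≤ i ≤ ℓ'` the first vanishes, and for `i > ℓ'` both are `≤ 0`. Hence `u` attains `K`
iff every term vanishes, i.e. iff `uᵢ = nᵢ` below `ℓ` and `uᵢ = 0` above `ℓ'`; the condition on
the block sum then follows by counting.
-/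

open Finset

theorem sum_sub_mul_sub_eq_of_sum_eq {ι R : Type*} [CommRing R] (s : Finset ι)
    (m a u : ι → R) (c d : R) (h : ∑ i ∈ s, u i = ∑ i ∈ s, a i + d) :
    ∑ i ∈ s, (m i - c) * (a i - u i) = ∑ i ∈ s, m i * a i + c * d - ∑ i ∈ s, m i * u i := by
  simp only [mul_sub, sub_mul, sum_sub_distrib, ← mul_sum, h]
  ring

section

variable {ι : Type*} [LinearOrder ι] {n m u : ι → ℕ} {j ℓ ℓ' i : ι}

def greedyLoss (m n u : ι → ℕ) (j i : ι) : ℤ :=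
  ((m i : ℤ) - m j) * ((if i < j then (n i : ℤ) else 0) - u i)

theorem greedyLoss_nonneg (hℓj : ℓ ≤ j) (hjℓ' : j ≤ ℓ') (hu : u i ≤ n i)
    (h1 : i < ℓ → m j < m i) (h2 : ℓ ≤ i → i ≤ ℓ' → m i = m j) (h3 : ℓ' < i → m i < m j) :
    0 ≤ greedyLoss m n u j i := by
  unfold greedyLoss
  rcases lt_or_ge i ℓ with hi | hi
  · rw [if_pos (hi.trans_le hℓj)]
    have := h1 hi
    exact mul_nonneg (by omega) (by omega)
  rcases le_or_gt i ℓ' with hi' | hi'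
  · simp [h2 hi hi']
  · rw [if_neg (not_lt.2 (hjℓ'.trans hi'.le))]
    have := h3 hi'
    exact mul_nonneg_of_nonpos_of_nonpos (by omega) (by omega)

theorem greedyLoss_eq_zero_iff (hℓj : ℓ ≤ j) (hjℓ' : j ≤ ℓ')
    (h1 : i < ℓ → m j < m i) (h2 : ℓ ≤ i → i ≤ ℓ' → m i = m j) (h3 : ℓ' < i → m i < m j) :
    greedyLoss m n u j i = 0 ↔ (i < ℓ → u i = n i) ∧ (ℓ' < i → u i = 0) := by
  unfold greedyLoss
  rcases lt_or_ge i ℓ with hi | hi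
  · rw [if_pos (hi.trans_le hℓj), mul_eq_zero]
    have := h1 hi
    simp only [hi, true_implies, not_lt.2 (hi.le.trans (hℓj.trans hjℓ')), false_implies,
      and_true]
    omega
  rcases le_or_gt i ℓ' with hi' | hi'
  · simp [h2 hi hi', hi', not_lt.2 hi]
  · rw [if_neg (not_lt.2 (hjℓ'.trans hi'.le)), mul_eq_zero]
    have := h3 hi'
    simp only [hi', true_implies, not_lt.2 hi, false_implies, true_and]
    omega

variable [Fintype ι]

theorem sum_greedyLoss {δ : ℕ} (hsum : ∑ i, u i = ∑ i ∈ univ.filter (· < j), n i + δ) :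
    ∑ i, greedyLoss m n u j i
      = ((∑ i ∈ univ.filter (· < j), m i * n i + m j * δ : ℕ) : ℤ) - ((∑ i, m i * u i : ℕ) : ℤ) := by
  have hsum' : ∑ i, (u i : ℤ) = ∑ i, (if i < j then (n i : ℤ) else 0) + δ := by
    rw [← sum_filter]
    exact_mod_cast hsum
  simp only [greedyLoss]
  rw [sum_sub_mul_sub_eq_of_sum_eq univ (fun i => (m i : ℤ)) _ _ (m j) _ hsum']
  simp only [mul_ite, mul_zero, ← sum_filter]
  push_cast
  rfl

theorem sum_filter_Icc_eq_of_greedy (hℓj : ℓ ≤ j) (hjℓ' : j ≤ ℓ') {δ : ℕ}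
    (hlow : ∀ i, i < ℓ → u i = n i) (hhigh : ∀ i, ℓ' < i → u i = 0)
    (hsum : ∑ i, u i = ∑ i ∈ univ.filter (· < j), n i + δ) :
    ∑ i ∈ univ.filter (fun i => ℓ ≤ i ∧ i ≤ ℓ'), u i
      = ∑ i ∈ univ.filter (fun i => ℓ ≤ i ∧ i < j), n i + δ := by
  set a : ι → ℕ := fun i => if i < j then n i else 0
  have hout : ∀ i ∈ univ.filter (fun i => ¬ (ℓ ≤ i ∧ i ≤ ℓ')), u i = a i := by
    intro i hi
    simp only [mem_filter, mem_univ, true_and, not_and_or, not_le] at hi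
    rcases hi with hi | hi
    · simp [a, hlow i hi, hi.trans_le hℓj]
    · simp [a, hhigh i hi, not_lt.2 (hjℓ'.trans hi.le)]
  have hmid : ∑ i ∈ univ.filter (fun i => ℓ ≤ i ∧ i ≤ ℓ'), a i
      = ∑ i ∈ univ.filter (fun i => ℓ ≤ i ∧ i < j), n i := by
    rw [sum_ite, sum_const_zero, add_zero, filter_filter]
    refine sum_congr (filter_congr fun i _ => ?_) fun _ _ => rfl
    exact ⟨fun h => ⟨h.1.1, h.2⟩, fun h => ⟨⟨h.1, h.2.le.trans hjℓ'⟩, h.2⟩⟩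
  have hall : ∑ i, a i = ∑ i ∈ univ.filter (· < j), n i := (sum_filter _ _).symm
  have hsplit_u := sum_filter_add_sum_filter_not univ (fun i => ℓ ≤ i ∧ i ≤ ℓ') u
  have hsplit_a := sum_filter_add_sum_filter_not univ (fun i => ℓ ≤ i ∧ i ≤ ℓ') a
  rw [sum_congr rfl hout] at hsplit_u
  linarith

end

theorem maximizer_characterization_general {t : ℕ} (n m : Fin t → ℕ)
    (r : ℕ)
    (j : Fin t) (δ : ℕ)
    (hrj : r = ∑ i ∈ univ.filter (· < j), n i + δ)
    (ℓ ℓ' : Fin t) (hℓj : ℓ ≤ j) (hjℓ' : j ≤ ℓ')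
    (h1 : ∀ i, i < ℓ → m j < m i)
    (h2 : ∀ i, ℓ ≤ i → i ≤ ℓ' → m i = m j)
    (h3 : ∀ i, ℓ' < i → m i < m j)
    (u : Fin t → ℕ) (hu : ∀ i, u i ≤ n i) (husum : ∑ i, u i = r) :
    (∑ i, m i * u i = ∑ i ∈ univ.filter (· < j), m i * n i + m j * δ) ↔
      ((∀ i, i < ℓ → u i = n i) ∧ (∀ i, ℓ' < i → u i = 0) ∧
        ∑ i ∈ univ.filter (fun i => ℓ ≤ i ∧ i ≤ ℓ'), u i
          = ∑ i ∈ univ.filter (fun i => ℓ ≤ i ∧ i < j), n i + δ) := by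
  subst husum
  calc (∑ i, m i * u i = ∑ i ∈ univ.filter (· < j), m i * n i + m j * δ)
      ↔ ∑ i, greedyLoss m n u j i = 0 := by
        rw [sum_greedyLoss hrj, sub_eq_zero, Nat.cast_inj, eq_comm]
    _ ↔ ∀ i, greedyLoss m n u j i = 0 := by
        simpa using sum_eq_zero_iff_of_nonneg (s := univ) fun i _ =>
          greedyLoss_nonneg hℓj hjℓ' (hu i) (h1 i) (h2 i) (h3 i)
    _ ↔ ∀ i, (i < ℓ → u i = n i) ∧ (ℓ' < i → u i = 0) :=
        forall_congr' fun i => greedyLoss_eq_zero_iff hℓj hjℓ' (h1 i) (h2 i) (h3 i)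
    _ ↔ _ := ⟨fun h => ⟨fun i => (h i).1, fun i => (h i).2,
          sum_filter_Icc_eq_of_greedy hℓj hjℓ' (fun i => (h i).1) (fun i => (h i).2) hrj⟩,
        fun h i => ⟨h.1 i, h.2.1 i⟩⟩

/-- Characterization of the maximizers: with r = Σ_{i<j} n_i + δ (0 ≤ δ < n_j) and
ℓ, ℓ' the indices with m_1 ≥ … ≥ m_{ℓ−1} > m_ℓ = … = m_j = … = m_{ℓ'} > m_{ℓ'+1} ≥ …,
a tuple u with u_i ≤ n_i and Σ u_i = r achieves Σ m_i u_i = K := Σ_{i<j} m_i n_i + m_j δ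
iff u_i = n_i for i < ℓ, u_i = 0 for i > ℓ', and Σ_{ℓ ≤ i ≤ ℓ'} u_i = Σ_{ℓ ≤ i < j} n_i + δ. -/
theorem maximizer_characterization {t : ℕ} (n m : Fin t → ℕ)
    (hn : ∀ i, 1 ≤ n i) (hnm : ∀ i, n i ≤ m i) (hm : Antitone m)
    (r : ℕ) (hr : r < ∑ i, n i)
    (j : Fin t) (δ : ℕ) (hδ : δ < n j)
    (hrj : r = ∑ i ∈ univ.filter (· < j), n i + δ)
    (ℓ ℓ' : Fin t) (hℓj : ℓ ≤ j) (hjℓ' : j ≤ ℓ')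
    (h1 : ∀ i, i < ℓ → m j < m i)
    (h2 : ∀ i, ℓ ≤ i → i ≤ ℓ' → m i = m j)
    (h3 : ∀ i, ℓ' < i → m i < m j)
    (u : Fin t → ℕ) (hu : ∀ i, u i ≤ n i) (husum : ∑ i, u i = r) :
    (∑ i, m i * u i = ∑ i ∈ univ.filter (· < j), m i * n i + m j * δ) ↔
      ((∀ i, i < ℓ → u i = n i) ∧ (∀ i, ℓ' < i → u i = 0) ∧
        ∑ i ∈ univ.filter (fun i => ℓ ≤ i ∧ i ≤ ℓ'), u i
          = ∑ i ∈ univ.filter (fun i => ℓ ≤ i ∧ i < j), n i + δ) :=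
  maximizer_characterization_general n m r j δ hrj ℓ ℓ' hℓj hjℓ' h1 h2 h3 u hu husum
end

section
/- Meshulam's covering theorem: let B be a nonempty finite set of matrices in F^{N×M} with pairwise distinct, nonzero elements, and let ρ(B) be the minimum number of lines (full rows or columns restricted to a block profile, or simply rows/columns of the full matrix) needed to cover the set of positions of initial entries (first nonzero entry in lexicographic order) of members of B. Then the F-linear span of B contains a matrix of rank at least ρ(B). -/
/-!
By König's theorem the initial positions contain `k` positions `p` in pairwise distinct rows and
columns; let `B p ∈ 𝓑` have `ini (B p) = p`. On the chosen rows and columns, `B p` vanishes in the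
rows above `p` and, in the row of `p`, to the left of `p`. Expanding the determinant multilinearly
in the rows and applying inclusion–exclusion over the subsets `S`, the alternating sum of the
minors of `∑ p ∈ S, B p` becomes a sum over surjective assignments of rows to the `B p`. Only the
identity assignment survives, and it contributes a triangular determinant, up to a permutation of
the columns, with nonzero diagonal. Hence some `∑ p ∈ S, B p` has a nonsingular `k × k` minor.
-/

open Finset Function

namespace MultilinearMap

variable {R : Type*} [CommSemiring R] {ι κ : Type*} [Fintype ι] [DecidableEq ι]
  [Fintype κ] [DecidableEq κ] {M N : Type*} [AddCommMonoid M] [Module R M]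
  [AddCommGroup N] [Module R N]

theorem sum_surjective_eq_sum_neg_one_pow (g : MultilinearMap R (fun _ : ι ↦ M) N)
    (x : κ → ι → M) :
    ∑ f : ι → κ with f.Surjective, g (fun j ↦ x (f j) j) =
      ∑ t : Finset κ, (-1 : ℤ) ^ #t • g (fun j ↦ ∑ i ∈ tᶜ, x i j) := by
  have h := inclusion_exclusion_sum_inf_compl (univ : Finset κ)
    (fun i ↦ ({f | ∀ j, f j ≠ i} : Finset (ι → κ))) (fun f ↦ g (fun j ↦ x (f j) j))
  convert h using 1
  · congr 1
    ext f
    simp only [mem_filter, mem_univ, true_and, mem_inf, mem_compl, forall_const]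
    simp [Function.Surjective]
  · rw [powerset_univ]
    refine sum_congr rfl fun t _ ↦ ?_
    rw [g.map_sum_finset (fun j i ↦ x i j) (fun _ ↦ tᶜ)]
    congr 2
    ext f
    simp only [Fintype.mem_piFinset, mem_compl, mem_inf, mem_filter, mem_univ, true_and]
    exact ⟨fun hf i hi j hj ↦ hf j (hj ▸ hi), fun hf j hj ↦ hf _ hj j rfl⟩

end MultilinearMap

theorem Function.Surjective.exists_lt_apply_of_ne_id {ι α : Type*} [Fintype ι] [LinearOrder α]
    {r : ι → α} (hr : Injective r) {f : ι → ι} (hf : f.Surjective) (hne : f ≠ id) :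
    ∃ j, r j < r (f j) := by
  classical
  by_contra! hle
  obtain ⟨j, hj, hmax⟩ := exists_max_image {j | f j ≠ j} r
    (by simpa [Finset.Nonempty, funext_iff] using hne)
  obtain ⟨j', rfl⟩ := hf j
  have hj' : f j' ≠ j' := fun h ↦ (mem_filter.mp hj).2 (congrArg f h)
  have := hmax j' (by simpa using hj')
  exact hj' (hr (le_antisymm (hle j') this))

theorem Matrix.det_ne_zero_of_blockTriangular {R ι β : Type*} [CommRing R] [IsDomain R]
    [Fintype ι] [DecidableEq ι] [LinearOrder β] {M : Matrix ι ι R} {c : ι → β}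
    (hc : Injective c) (hM : M.BlockTriangular c) (hdiag : ∀ i, M i i ≠ 0) :
    M.det ≠ 0 := by
  let : LinearOrder ι := LinearOrder.lift' c hc
  rw [Matrix.det_of_isUpperTriangular hM]
  exact prod_ne_zero_iff.mpr fun i _ ↦ hdiag i

theorem Matrix.exists_det_sum_ne_zero {R ι α β : Type*} [CommRing R] [IsDomain R] [Fintype ι]
    [DecidableEq ι] [LinearOrder α] [LinearOrder β] (A : ι → Matrix ι ι R) {r : ι → α}
    {c : ι → β} (hr : Injective r) (hc : Injective c)
    (hrow : ∀ i j, r j < r i → A i j = 0) (hlead : (Matrix.of fun i ↦ A i i).BlockTriangular c)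
    (hdiag : ∀ i, A i i i ≠ 0) :
    ∃ S : Finset ι, (∑ i ∈ S, A i).det ≠ 0 := by
  by_contra! h
  have hzero : ∑ f : ι → ι with f.Surjective, det (of fun j ↦ A (f j) j) = 0 := by
    have hsum (t : Finset ι) : det (of fun j ↦ ∑ i ∈ tᶜ, A i j) = 0 := by
      rw [← h tᶜ]
      congr
      ext j l
      simp [Matrix.sum_apply]
    have := detRowAlternating.toMultilinearMap.sum_surjective_eq_sum_neg_one_pow A
    simp only [AlternatingMap.coe_multilinearMap] at this
    exact this.trans (sum_eq_zero fun t _ ↦ smul_eq_zero_of_right _ (hsum t))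
  rw [sum_eq_single_of_mem id (by simp [Function.surjective_id])] at hzero
  · exact det_ne_zero_of_blockTriangular hc hlead hdiag hzero
  · intro f hf hne
    obtain ⟨j, hj⟩ := (mem_filter.mp hf).2.exists_lt_apply_of_ne_id hr hne
    exact det_eq_zero_of_row_eq_zero j fun l ↦ congrFun (hrow (f j) j hj) l

theorem Matrix.exists_card_le_rank_sum {F m n ι : Type*} [Field F] [LinearOrder m]
    [LinearOrder n] [Fintype n] [Fintype ι] [DecidableEq ι] (B : ι → Matrix m n F)
    (p : ι → m × n) (hfst : Injective (Prod.fst ∘ p)) (hsnd : Injective (Prod.snd ∘ p))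
    (hlead : ∀ i, B i (p i).1 (p i).2 ≠ 0)
    (hbefore : ∀ i q, toLex q < toLex (p i) → B i q.1 q.2 = 0) :
    ∃ S : Finset ι, Fintype.card ι ≤ (∑ i ∈ S, B i).rank := by
  set A : ι → Matrix ι ι F := fun i ↦ (B i).submatrix (Prod.fst ∘ p) (Prod.snd ∘ p)
  have hrow (i j : ι) (hj : (p j).1 < (p i).1) : A i j = 0 :=
    funext fun l ↦ hbefore i ((p j).1, (p l).2) (Prod.Lex.toLex_lt_toLex.mpr (.inl hj))
  have htri : (of fun i ↦ A i i).BlockTriangular (Prod.snd ∘ p) := fun i l hl ↦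
    hbefore i ((p i).1, (p l).2) (Prod.Lex.toLex_lt_toLex.mpr (.inr ⟨rfl, hl⟩))
  obtain ⟨S, hS⟩ := exists_det_sum_ne_zero A hfst hsnd hrow htri hlead
  refine ⟨S, ?_⟩
  calc Fintype.card ι = ((∑ i ∈ S, B i).submatrix (Prod.fst ∘ p) (Prod.snd ∘ p)).rank := by
        rw [← rank_of_det_ne_zero hS]
        congr
        ext
        simp [A, Matrix.sum_apply]
    _ ≤ (∑ i ∈ S, B i).rank := rank_submatrix_le _ _ _

theorem Finset.exists_matching_of_forall_le_cover {α β : Type*} [Fintype α] [DecidableEq α]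
    [Fintype β] [DecidableEq β] (S : Finset (α × β)) (k : ℕ)
    (hcover : ∀ (R : Finset α) (C : Finset β), (∀ p ∈ S, p.1 ∈ R ∨ p.2 ∈ C) → k ≤ #R + #C) :
    ∃ P ⊆ S, Set.InjOn Prod.fst (P : Set (α × β)) ∧ Set.InjOn Prod.snd (P : Set (α × β)) ∧
      k ≤ #P := by
  have hk : k ≤ Fintype.card α := by simpa using hcover univ ∅ (by simp)
  -- Hall's theorem after adding `card α - k` dummy columns adjacent to every row: the cover
  -- `(Aᶜ, N(A))` yields Hall's condition, and at most `card α - k` rows are matched to a dummy.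
  let nbr (i : α) : Finset β := {j | (i, j) ∈ S}
  let t (i : α) : Finset (β ⊕ Fin (Fintype.card α - k)) := (nbr i).disjSum univ
  have hall (A : Finset α) : #A ≤ #(A.biUnion t) := by
    obtain rfl | ⟨i₀, hi₀⟩ := A.eq_empty_or_nonempty
    · simp
    have hA := hcover Aᶜ (A.biUnion nbr) fun p hp ↦ by
      by_cases h : p.1 ∈ A
      · exact .inr (mem_biUnion.mpr ⟨p.1, h, by simpa [nbr] using hp⟩)
      · exact .inl (mem_compl.mpr h)
    have hsub : (A.biUnion nbr).disjSum univ ⊆ A.biUnion t := by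
      rintro (j | j) hj
      · obtain ⟨i, hi, hj⟩ := mem_biUnion.mp (inl_mem_disjSum.mp hj)
        exact mem_biUnion.mpr ⟨i, hi, inl_mem_disjSum.mpr hj⟩
      · exact mem_biUnion.mpr ⟨i₀, hi₀, inr_mem_disjSum.mpr (mem_univ j)⟩
    have := card_le_card hsub
    rw [card_disjSum, card_univ, Fintype.card_fin] at this
    rw [card_compl] at hA
    have := A.card_le_univ
    omega
  obtain ⟨f, hf, hft⟩ := (all_card_le_biUnion_card_iff_exists_injective t).mp hall
  set P : Finset (α × β) := {p ∈ S | f p.1 = .inl p.2}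
  refine ⟨P, filter_subset _ _, ?_, ?_, ?_⟩
  · intro p hp q hq h
    simp only [P, mem_coe, mem_filter] at hp hq
    exact Prod.ext h (Sum.inl_injective (hp.2.symm.trans (h ▸ hq.2)))
  · intro p hp q hq h
    simp only [P, mem_coe, mem_filter] at hp hq
    exact Prod.ext (hf (by rw [hp.2, hq.2, h])) h
  · have himage : univ.image f ⊆ (P.image Prod.snd).disjSum univ := by
      rintro _ hy
      obtain ⟨i, -, rfl⟩ := mem_image.mp hy
      have hi := hft i
      cases hfi : f i with
      | inl j =>
        rw [hfi, inl_mem_disjSum] at hi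
        have hij : (i, j) ∈ P := mem_filter.mpr ⟨(mem_filter.mp hi).2, hfi⟩
        exact inl_mem_disjSum.mpr (mem_image_of_mem Prod.snd hij)
      | inr j => exact inr_mem_disjSum.mpr (mem_univ j)
    have := card_le_card himage
    rw [card_image_of_injective _ hf, card_univ, card_disjSum, card_univ, Fintype.card_fin] at this
    have := card_image_le (s := P) (f := Prod.snd)
    omega

theorem meshulam_covering_general {F : Type*} [Field F] {N M : ℕ}
    (𝓑 : Finset (Matrix (Fin N) (Fin M) F))
    (ini : Matrix (Fin N) (Fin M) F → Fin N × Fin M)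
    (hini : ∀ B ∈ 𝓑, B (ini B).1 (ini B).2 ≠ 0 ∧
      ∀ p : Fin N × Fin M, B p.1 p.2 ≠ 0 → toLex (ini B) ≤ toLex p)
    (k : ℕ)
    (hcover : ∀ (R : Finset (Fin N)) (Cc : Finset (Fin M)),
      (∀ B ∈ 𝓑, (ini B).1 ∈ R ∨ (ini B).2 ∈ Cc) → k ≤ R.card + Cc.card) :
    ∃ Z ∈ Submodule.span F (𝓑 : Set (Matrix (Fin N) (Fin M) F)), k ≤ Z.rank := by
  obtain ⟨P, hPS, hfst, hsnd, hkP⟩ := (𝓑.image ini).exists_matching_of_forall_le_cover k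
    fun R C h ↦ hcover R C fun B hB ↦ h _ (mem_image_of_mem ini hB)
  choose B hB hBini using fun p : P ↦ mem_image.mp (hPS p.2)
  have hinitial (p : P) := hBini p ▸ hini (B p) (hB p)
  obtain ⟨S, hS⟩ := Matrix.exists_card_le_rank_sum B Subtype.val hfst.injective hsnd.injective
    (fun p ↦ (hinitial p).1)
    (fun p q hq ↦ by_contra fun hne ↦ (hinitial p).2 q hne |>.not_gt hq)
  refine ⟨∑ p ∈ S, B p, Submodule.sum_mem _ fun p _ ↦ Submodule.subset_span (hB p), ?_⟩
  exact hkP.trans ((Fintype.card_coe P).ge.trans hS)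

/-- Meshulam's covering theorem: let 𝓑 be a nonempty finite set of nonzero matrices,
`ini B` the lexicographically least position of a nonzero entry of each `B ∈ 𝓑`, and
suppose every cover of the set of initial positions of members of 𝓑 by rows R and
columns Cc uses at least k lines. Then the F-linear span of 𝓑 contains a matrix of
rank at least k. -/
theorem meshulam_covering {F : Type*} [Field F] {N M : ℕ}
    (𝓑 : Finset (Matrix (Fin N) (Fin M) F)) (h𝓑 : 𝓑.Nonempty)
    (h0 : ∀ B ∈ 𝓑, B ≠ 0)
    (ini : Matrix (Fin N) (Fin M) F → Fin N × Fin M)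
    (hini : ∀ B ∈ 𝓑, B (ini B).1 (ini B).2 ≠ 0 ∧
      ∀ p : Fin N × Fin M, B p.1 p.2 ≠ 0 → toLex (ini B) ≤ toLex p)
    (k : ℕ)
    (hcover : ∀ (R : Finset (Fin N)) (Cc : Finset (Fin M)),
      (∀ B ∈ 𝓑, (ini B).1 ∈ R ∨ (ini B).2 ∈ Cc) → k ≤ R.card + Cc.card) :
    ∃ Z ∈ Submodule.span F (𝓑 : Set (Matrix (Fin N) (Fin M) F)), k ≤ Z.rank :=
  meshulam_covering_general 𝓑 ini hini k hcover
end

section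
/- Singleton bound for the sum-rank metric: suppose n_i ≤ m_i for all i and m_1 ≥ … ≥ m_t. Let C ⊆ Π = ⊕_{i=1}^t F_q^{n_i × m_i} with |C| ≥ 2 and minimum sum-rank distance d, and let j, δ be the unique integers with d − 1 = Σ_{i=1}^{j−1} n_i + δ, 0 ≤ δ ≤ n_j − 1. Then |C| ≤ q^{Σ_{i=j}^t m_i n_i − m_j δ}. -/
/-!
Puncture the code: delete `k i` leading rows of the `i`-th block, with `∑ k i = d - 1`.
Two codewords with the same punctured image differ only in the deleted rows, so their difference
has sum-rank at most `d - 1 < d`; hence puncturing is injective on `C`, and `|C|` is at most the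
number of punctured tuples. Deleting all rows of the blocks before `j` and `δ` rows of block `j`
gives the stated exponent.
-/

open Finset

theorem Fin.card_subtype_le_val (n k : ℕ) :
    Fintype.card {r : Fin n // k ≤ (r : ℕ)} = n - k := by
  simp_rw [← not_lt]
  rw [Fintype.card_subtype_compl, Fintype.card_subtype, Fin.card_filter_val_lt, Fintype.card_fin]
  omega

theorem Matrix.rank_le_of_row_eq_zero_of_le {F : Type*} [Field F] {a b : ℕ}
    (A : Matrix (Fin a) (Fin b) F) (k : ℕ) (h : ∀ r : Fin a, k ≤ r → A r = 0) :
    A.rank ≤ k := by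
  classical
  refine (A.rank_le_card_of_support_subset {r | (r : ℕ) < k} fun r hr => ?_).trans ?_
  · by_contra hrk
    exact hr (h r (by simpa using hrk))
  · rw [Fin.card_filter_val_lt]
    exact min_le_right _ _

theorem natCard_le_pow_of_sum_lt_srk {F : Type*} [Field F] [Fintype F] {t : ℕ}
    {n m : Fin t → ℕ} (k : Fin t → ℕ) (C : Set (∀ i : Fin t, Matrix (Fin (n i)) (Fin (m i)) F))
    (hC : ∀ X ∈ C, ∀ Y ∈ C, X ≠ Y → ∑ i, k i < srk (X - Y)) :
    Nat.card C ≤ Fintype.card F ^ ∑ i, m i * (n i - k i) := by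
  let puncture : C → ∀ i, {r : Fin (n i) // k i ≤ (r : ℕ)} → Fin (m i) → F :=
    fun X i r => X.1 i r
  have puncture_injective : Function.Injective puncture := by
    intro X Y hXY
    by_contra hne
    have hsrk : srk (X.1 - Y.1) ≤ ∑ i, k i :=
      sum_le_sum fun i _ => Matrix.rank_le_of_row_eq_zero_of_le _ (k i) fun r hr => by
        funext c
        simpa [sub_eq_zero] using congrFun (congrFun (congrFun hXY i) ⟨r, hr⟩) c
    exact (hC X.1 X.2 Y.1 Y.2 (Subtype.coe_ne_coe.2 hne)).not_ge hsrk
  calc Nat.card C ≤ Nat.card (∀ i, {r : Fin (n i) // k i ≤ (r : ℕ)} → Fin (m i) → F) :=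
        Nat.card_le_card_of_injective puncture puncture_injective
    _ = Fintype.card F ^ ∑ i, m i * (n i - k i) := by
        rw [Nat.card_pi, ← prod_pow_eq_pow_sum]
        refine prod_congr rfl fun i _ => ?_
        rw [Nat.card_fun, Nat.card_fun, ← pow_mul, Nat.card_eq_fintype_card (α := Subtype _),
          Fin.card_subtype_le_val, Nat.card_fin, Nat.card_eq_fintype_card, mul_comm]

theorem singleton_bound_general {F : Type*} [Field F] [Fintype F] {t : ℕ}
    (n m : Fin t → ℕ)
    (d : ℕ) (hd : 1 ≤ d)
    (C : Set (∀ i : Fin t, Matrix (Fin (n i)) (Fin (m i)) F))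
    (hCd : ∀ X ∈ C, ∀ Y ∈ C, X ≠ Y → d ≤ srk (X - Y))
    (j : Fin t) (δ : ℕ) (hδ : δ ≤ n j - 1)
    (hdj : d - 1 = ∑ i ∈ univ.filter (· < j), n i + δ) :
    Nat.card C ≤
      Fintype.card F ^ (∑ i ∈ univ.filter (fun i => j ≤ i), m i * n i - m j * δ) := by
  set k : Fin t → ℕ := fun i => (if i < j then n i else 0) + if i = j then δ else 0
  have hk_sum : ∑ i, k i = d - 1 := by
    simp [k, sum_add_distrib, sum_filter, hdj]
  have hk_exp : ∑ i, m i * (n i - k i) + m j * δ =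
      ∑ i ∈ univ.filter (fun i => j ≤ i), m i * n i := by
    rw [sum_filter, ← Fintype.sum_ite_eq' j (fun i => m i * δ), ← sum_add_distrib]
    refine sum_congr rfl fun i _ => ?_
    rcases lt_trichotomy i j with hij | rfl | hij
    · simp [k, hij, hij.ne, hij.not_ge]
    · simp [k, ← mul_add, Nat.sub_add_cancel (hδ.trans (Nat.sub_le _ _))]
    · simp [k, hij.ne', hij.not_gt, hij.le]
  calc Nat.card C ≤ Fintype.card F ^ ∑ i, m i * (n i - k i) :=
        natCard_le_pow_of_sum_lt_srk k C fun X hX Y hY hXY => by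
          have := hCd X hX Y hY hXY
          omega
    _ = _ := by rw [← hk_exp, Nat.add_sub_cancel]

/-- Singleton bound for the sum-rank metric: with n_i ≤ m_i and m_1 ≥ … ≥ m_t, if
C ⊆ ⊕ F_q^{n_i × m_i} has |C| ≥ 2 and minimum sum-rank distance d, and
d − 1 = Σ_{i<j} n_i + δ with 0 ≤ δ ≤ n_j − 1, then |C| ≤ q^{Σ_{i≥j} m_i n_i − m_j δ}. -/
theorem singleton_bound {F : Type*} [Field F] [Fintype F] {t : ℕ}
    (n m : Fin t → ℕ) (hn : ∀ i, 1 ≤ n i) (hnm : ∀ i, n i ≤ m i) (hm : Antitone m)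
    (d : ℕ) (hd : 1 ≤ d)
    (C : Set (∀ i : Fin t, Matrix (Fin (n i)) (Fin (m i)) F))
    (hC2 : 2 ≤ Nat.card C)
    (hCd : ∀ X ∈ C, ∀ Y ∈ C, X ≠ Y → d ≤ srk (X - Y))
    (hCeq : ∃ X ∈ C, ∃ Y ∈ C, X ≠ Y ∧ srk (X - Y) = d)
    (j : Fin t) (δ : ℕ) (hδ : δ ≤ n j - 1)
    (hdj : d - 1 = ∑ i ∈ univ.filter (· < j), n i + δ) :
    Nat.card C ≤
      Fintype.card F ^ (∑ i ∈ univ.filter (fun i => j ≤ i), m i * n i - m j * δ) :=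
  singleton_bound_general n m d hd C hCd j δ hδ hdj
end

section
/- Over any field F with |F| ≥ 3, every linear subspace A ≤ F^t in which every vector has Hamming weight at most r and which has dimension r (the maximum possible) is a coordinate subspace: there exists a subset I ⊆ {1,…,t} with |I| = r such that A = {x ∈ F^t : x_i = 0 for all i ∉ I}. -/
/-!
Take a set `P` of coordinates, minimal among those on which no nonzero vector of `A` vanishes.
Restriction to `P` is injective on `A`, so `r ≤ |P|`, and minimality gives for each `p ∈ P` a
vector `g p ∈ A` that is the indicator of `p` on `P`. The sum of the `g p` is `1` on `P`, so its
weight forces `|P| = r`: a vector of `A` that is nonzero on all of `P` vanishes off `P`.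
Applied to `∑ g + e • g p` with `e ∉ {0, -1}`, which exists as `|F| ≥ 3`, this shows that
`g p` is supported on `P`; since the `g p` span `A`, it is the coordinate subspace on `P`.
-/

open Finset Module

section Hamming

variable {ι β : Type*} [Fintype ι] [Zero β] [DecidableEq β]

theorem card_le_hammingNorm {x : ι → β} {s : Finset ι} (hs : ∀ i ∈ s, x i ≠ 0) :
    #s ≤ hammingNorm x :=
  card_le_card fun i hi => by simpa using hs i hi

theorem apply_eq_zero_of_hammingNorm_le [DecidableEq ι] {x : ι → β} {s : Finset ι}
    (hx : hammingNorm x ≤ #s) (hs : ∀ i ∈ s, x i ≠ 0) {i : ι} (hi : i ∉ s) :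
    x i = 0 := by
  by_contra h
  have hcard := card_le_hammingNorm (s := insert i s) (x := x) (by simpa [h] using hs)
  rw [card_insert_of_notMem hi] at hcard
  omega

end Hamming

theorem exists_ne_ne_of_three {α : Type*} (h3 : ∃ a b c : α, a ≠ b ∧ a ≠ c ∧ b ≠ c)
    (x y : α) : ∃ e, e ≠ x ∧ e ≠ y := by
  obtain ⟨a, b, c, hab, hac, hbc⟩ := h3
  by_contra! h
  rcases eq_or_ne a x with rfl | ha
  · exact hbc ((h b hab.symm).trans (h c hac.symm).symm)
  rcases eq_or_ne b x with rfl | hb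
  · exact hac ((h a ha).trans (h c hbc.symm).symm)
  exact hab ((h a ha).trans (h b hb).symm)

section Pivots

variable {ι F : Type*} [DivisionRing F] {P : Finset ι} {g : ι → ι → F}

theorem sum_smul_pivot_apply [DecidableEq ι]
    (hg : ∀ p ∈ P, ∀ q ∈ P, g p q = (Pi.single p 1 : ι → F) q) (x : ι → F) {q : ι}
    (hq : q ∈ P) :
    (∑ p ∈ P, x p • g p) q = x q := by
  rw [Finset.sum_apply, sum_eq_single q (fun p hp hpq => by simp [hg p hp q hq, hpq.symm])
    (absurd hq)]
  simp [hg q hq q hq]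

namespace Submodule

variable (A : Submodule F (ι → F))

def IsSeparatingSet (P : Finset ι) : Prop :=
  ∀ x ∈ A, (∀ p ∈ P, x p = 0) → x = 0

variable {A}

theorem exists_minimal_isSeparatingSet [Fintype ι] : ∃ P, Minimal A.IsSeparatingSet P :=
  exists_minimal_of_wellFoundedLT _ ⟨univ, fun _ _ hx => funext fun i => hx i (mem_univ i)⟩

theorem IsSeparatingSet.finrank_le_card (hP : A.IsSeparatingSet P) : finrank F A ≤ #P := by
  let restrict := (LinearMap.funLeft F F (Subtype.val : P → ι)) ∘ₗ A.subtype
  have hinj : Function.Injective restrict := by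
    refine (injective_iff_map_eq_zero restrict).2 fun x hx => Subtype.ext <|
      hP x x.2 fun p hp => ?_
    simpa [restrict, LinearMap.funLeft] using congrFun hx ⟨p, hp⟩
  simpa using LinearMap.finrank_le_finrank_of_injective hinj

variable [DecidableEq ι]

theorem exists_pivot_of_minimal (hP : Minimal A.IsSeparatingSet P) {p : ι} (hp : p ∈ P) :
    ∃ g ∈ A, ∀ q ∈ P, g q = (Pi.single p 1 : ι → F) q := by
  obtain ⟨x, hxA, hx0, hx⟩ : ∃ x ∈ A, (∀ q ∈ P.erase p, x q = 0) ∧ x ≠ 0 := by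
    simpa [IsSeparatingSet] using hP.not_prop_of_lt (erase_ssubset hp)
  have hxp : x p ≠ 0 := fun h => hx <| hP.prop x hxA fun q hq => by
    rcases eq_or_ne q p with rfl | hqp
    exacts [h, hx0 q (mem_erase.2 ⟨hqp, hq⟩)]
  refine ⟨(x p)⁻¹ • x, A.smul_mem _ hxA, fun q hq => ?_⟩
  rcases eq_or_ne q p with rfl | hqp
  · simp [hxp]
  · simp [hqp, hx0 q (mem_erase.2 ⟨hqp, hq⟩)]

theorem IsSeparatingSet.coe_eq_setOf (hP : A.IsSeparatingSet P) (hgA : ∀ p ∈ P, g p ∈ A)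
    (hg : ∀ p ∈ P, ∀ q ∈ P, g p q = (Pi.single p 1 : ι → F) q)
    (hgP : ∀ p ∈ P, ∀ q ∉ P, g p q = 0) :
    (A : Set (ι → F)) = {x | ∀ q ∉ P, x q = 0} := by
  have hsum (x : ι → F) : ∑ p ∈ P, x p • g p ∈ A :=
    sum_mem fun p hp => A.smul_mem _ (hgA p hp)
  have hsumP (x : ι → F) {q : ι} (hq : q ∉ P) : (∑ p ∈ P, x p • g p) q = 0 := by
    rw [Finset.sum_apply]
    exact sum_eq_zero fun p hp => by simp [hgP p hp q hq]
  refine Set.ext fun x => ⟨fun hx q hq => ?_, fun hx => ?_⟩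
  · have hx_eq : x = ∑ p ∈ P, x p • g p := sub_eq_zero.1 <| hP _ (A.sub_mem hx (hsum x))
      fun q hq => by simp [sum_smul_pivot_apply hg x hq]
    rw [hx_eq, hsumP x hq]
  · have hx_eq : ∑ p ∈ P, x p • g p = x := funext fun q => by
      by_cases hq : q ∈ P
      · exact sum_smul_pivot_apply hg x hq
      · rw [hx q hq, hsumP x hq]
    exact hx_eq ▸ hsum x

end Submodule

end Pivots

/-- Over a field with at least 3 elements, every linear r-anticode for the Hamming
metric in F^t of the maximal dimension r is a coordinate subspace: there is an
r-element set I of coordinates such that A = {x : x_i = 0 for all i ∉ I}. -/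
theorem optimal_hamming_anticode {F : Type*} [Field F] [DecidableEq F]
    (h3 : ∃ a b c : F, a ≠ b ∧ a ≠ c ∧ b ≠ c)
    (t r : ℕ) (A : Submodule F (Fin t → F))
    (hw : ∀ x ∈ A, hammingNorm x ≤ r)
    (hdim : Module.finrank F A = r) :
    ∃ I : Finset (Fin t), I.card = r ∧
      (A : Set (Fin t → F)) = {x | ∀ i ∉ I, x i = 0} := by
  obtain ⟨e, he0, he1⟩ := exists_ne_ne_of_three h3 0 (-1)
  obtain ⟨P, hP⟩ := A.exists_minimal_isSeparatingSet
  choose! g hgA hg using fun p (hp : p ∈ P) => Submodule.exists_pivot_of_minimal hP hp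
  set z : Fin t → F := ∑ p ∈ P, g p
  have hzA : z ∈ A := Submodule.sum_mem _ hgA
  have hz (q : Fin t) (hq : q ∈ P) : z q = 1 := by
    simpa [z] using sum_smul_pivot_apply hg 1 hq
  obtain rfl : #P = r := le_antisymm
    ((card_le_hammingNorm fun q hq => by simp [hz q hq]).trans (hw z hzA))
    (hdim ▸ hP.prop.finrank_le_card)
  have hzP (q : Fin t) (hq : q ∉ P) : z q = 0 :=
    apply_eq_zero_of_hammingNorm_le (hw z hzA) (fun i hi => by simp [hz i hi]) hq
  have hgP (p : Fin t) (hp : p ∈ P) (q : Fin t) (hq : q ∉ P) : g p q = 0 := by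
    have hyA : z + e • g p ∈ A := A.add_mem hzA (A.smul_mem e (hgA p hp))
    have hyP (i : Fin t) (hi : i ∈ P) : (z + e • g p) i ≠ 0 := by
      rcases eq_or_ne i p with rfl | hip
      · simpa [hz i hi, hg i hi i hi, add_eq_zero_iff_eq_neg'] using he1
      · simp [hz i hi, hg p hp i hi, hip]
    simpa [hzP q hq, he0] using apply_eq_zero_of_hammingNorm_le (hw _ hyA) hyP hq
  exact ⟨P, rfl, hP.prop.coe_eq_setOf hgA hg hgP⟩
end

section
/- For fixed block sizes with n_i ≤ m_i, let K be the maximal dimension of a linear r-anticode in Π = ⊕_{i=1}^t F_q^{n_i × m_i} (so K = max{Σ m_i u_i : u ∈ U_r}), and let ρ = ⌊r/2⌋ with r ≥ 1. Then for all sufficiently large prime powers q, the cardinality V_ρ(Π) of the sum-rank ball of radius ρ is strictly less than q^K. -/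
/-!
Bounding `[n choose s]_q ≤ 2^s q^(s(n-s))` (count pairs of a subspace and a basis of it inside
`(F^n)^s`) and `∏_{j<s} (q^m - q^j) ≤ q^(ms)`, every term of `V_ρ` is at most `2^N q^E(s)` with
`E(s) = ∑ s_i (n_i - s_i) + m_i s_i`. When `∑ s_i ≤ r/2`, any `u` of total `r` with
`min (2 s_i) n_i ≤ u_i ≤ n_i` is admissible and satisfies `E(s) < ∑ m_i u_i ≤ K`. The number of
terms does not depend on `q`, so `V_ρ < q^K` as soon as `q` exceeds `2^N` times that number.
-/

/-- The Gaussian binomial coefficient [n choose s]_q : the number of s-dimensional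
subspaces of F^n (with q = |F|). -/
noncomputable def gbinom (F : Type*) [Field F] (n s : ℕ) : ℕ :=
  Nat.card {U : Submodule F (Fin n → F) // Module.finrank F U = s}

open Finset

section GaussianBinomial

variable (F : Type*) [Field F] [Fintype F]

theorem gbinom_mul_card_linearIndependent_le (n s : ℕ) :
    gbinom F n s * Nat.card {v : Fin s → Fin s → F // LinearIndependent F v}
      ≤ Fintype.card F ^ (n * s) := by
  classical
  let A := {U : Submodule F (Fin n → F) // Module.finrank F U = s}
  let B := {v : Fin s → Fin s → F // LinearIndependent F v}
  let e : ∀ U : A, (Fin s → F) ≃ₗ[F] U.1 :=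
    fun U => LinearEquiv.ofFinrankEq _ _ (by simpa using U.2.symm)
  let f : A × B → Fin s → Fin n → F := fun p j => (e p.1 (p.2.1 j) : Fin n → F)
  have span_range_f (p : A × B) : Submodule.span F (Set.range (f p)) = p.1.1 := by
    have hli : LinearIndependent F (f p) :=
      p.2.2.map' (p.1.1.subtype ∘ₗ (e p.1).toLinearMap) <| by
        rw [LinearMap.ker_eq_bot]
        exact p.1.1.injective_subtype.comp (e p.1).injective
    refine Submodule.eq_of_le_of_finrank_le ?_ ?_
    · rw [Submodule.span_le]
      rintro _ ⟨j, rfl⟩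
      exact (e p.1 (p.2.1 j)).2
    · rw [finrank_span_eq_card hli, p.1.2, Fintype.card_fin]
  have hf : Function.Injective f := by
    rintro ⟨U, v⟩ ⟨W, w⟩ h
    obtain rfl : U = W := Subtype.ext <| by
      rw [← span_range_f (U, v), ← span_range_f (W, w), h]
    exact Prod.ext rfl <| Subtype.ext <| funext fun j =>
      (e U).injective <| Subtype.ext <| congrFun h j
  calc gbinom F n s * Nat.card B = Nat.card (A × B) := (Nat.card_prod _ _).symm
    _ ≤ Nat.card (Fin s → Fin n → F) := Nat.card_le_card_of_injective f hf
    _ = Fintype.card F ^ (n * s) := by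
      simp only [Nat.card_eq_fintype_card, Fintype.card_pi, prod_const, card_univ,
        Fintype.card_fin, ← pow_mul]

theorem pow_mul_self_le_two_pow_mul_prod_sub {q : ℕ} (hq : 2 ≤ q) (s : ℕ) :
    q ^ (s * s) ≤ 2 ^ s * ∏ i : Fin s, (q ^ s - q ^ (i : ℕ)) := by
  have factor_le (i : Fin s) : q ^ s ≤ 2 * (q ^ s - q ^ (i : ℕ)) := by
    have : 2 * q ^ (i : ℕ) ≤ q ^ s :=
      calc 2 * q ^ (i : ℕ) ≤ q ^ ((i : ℕ) + 1) := by rw [pow_succ']; gcongr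
        _ ≤ q ^ s := Nat.pow_le_pow_right (by omega) i.isLt
    omega
  calc q ^ (s * s) = ∏ _i : Fin s, q ^ s := by simp [← pow_mul]
    _ ≤ ∏ i : Fin s, 2 * (q ^ s - q ^ (i : ℕ)) := prod_le_prod' fun i _ => factor_le i
    _ = 2 ^ s * ∏ i : Fin s, (q ^ s - q ^ (i : ℕ)) := by simp [prod_mul_distrib]

theorem gbinom_le {n s : ℕ} (hs : s ≤ n) :
    gbinom F n s ≤ 2 ^ s * Fintype.card F ^ (s * (n - s)) := by
  set q := Fintype.card F
  have hq : 2 ≤ q := Fintype.one_lt_card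
  have hLI : Nat.card {v : Fin s → Fin s → F // LinearIndependent F v} =
      ∏ i : Fin s, (q ^ s - q ^ (i : ℕ)) := by
    rw [card_linearIndependent (by simp)]
    simp [q]
  refine Nat.le_of_mul_le_mul_right (c := q ^ (s * s)) ?_ (by positivity)
  calc gbinom F n s * q ^ (s * s)
      ≤ gbinom F n s * (2 ^ s * ∏ i : Fin s, (q ^ s - q ^ (i : ℕ))) := by
        gcongr; exact pow_mul_self_le_two_pow_mul_prod_sub hq s
    _ = 2 ^ s * (gbinom F n s * Nat.card {v : Fin s → Fin s → F // LinearIndependent F v}) := by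
        rw [hLI]; ring
    _ ≤ 2 ^ s * q ^ (n * s) := by gcongr; exact gbinom_mul_card_linearIndependent_le F n s
    _ = 2 ^ s * q ^ (s * (n - s)) * q ^ (s * s) := by
        obtain ⟨d, rfl⟩ := Nat.exists_eq_add_of_le hs
        rw [Nat.add_sub_cancel_left, mul_assoc, ← pow_add]
        ring_nf

theorem gbinom_mul_prod_sub_le {n s : ℕ} (hs : s ≤ n) (m : ℕ) :
    gbinom F n s * ∏ j ∈ range s, (Fintype.card F ^ m - Fintype.card F ^ j)
      ≤ 2 ^ s * Fintype.card F ^ (s * (n - s) + m * s) := by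
  calc gbinom F n s * ∏ j ∈ range s, (Fintype.card F ^ m - Fintype.card F ^ j)
      ≤ (2 ^ s * Fintype.card F ^ (s * (n - s))) * ∏ _j ∈ range s, Fintype.card F ^ m :=
        Nat.mul_le_mul (gbinom_le F hs) (prod_le_prod' fun _ _ => Nat.sub_le _ _)
    _ = 2 ^ s * Fintype.card F ^ (s * (n - s) + m * s) := by
        rw [prod_const, card_range, ← pow_mul, mul_assoc, ← pow_add]

theorem prod_gbinom_mul_prod_sub_le {ι : Type*} [Fintype ι] {n s : ι → ℕ} (hsn : s ≤ n)
    (m : ι → ℕ) :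
    ∏ i, gbinom F (n i) (s i) * ∏ j ∈ range (s i), (Fintype.card F ^ m i - Fintype.card F ^ j)
      ≤ 2 ^ (∑ i, n i) * Fintype.card F ^ ∑ i, (s i * (n i - s i) + m i * s i) := by
  calc _ ≤ ∏ i, 2 ^ s i * Fintype.card F ^ (s i * (n i - s i) + m i * s i) :=
        prod_le_prod' fun i _ => gbinom_mul_prod_sub_le F (hsn i) (m i)
    _ = 2 ^ (∑ i, s i) * Fintype.card F ^ ∑ i, (s i * (n i - s i) + m i * s i) := by
        rw [prod_mul_distrib, prod_pow_eq_pow_sum, prod_pow_eq_pow_sum]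
    _ ≤ _ := by
        gcongr
        · norm_num
        · exact hsn _

end GaussianBinomial

section AnticodeExponent

variable {ι : Type*} [Fintype ι]

theorem exists_le_le_sum_eq [DecidableEq ι] {v n : ι → ℕ} (hvn : v ≤ n) {r : ℕ}
    (hvr : ∑ i, v i ≤ r) (hrn : r ≤ ∑ i, n i) :
    ∃ u : ι → ℕ, v ≤ u ∧ u ≤ n ∧ ∑ i, u i = r := by
  induction r, hvr using Nat.le_induction with
  | base => exact ⟨v, le_rfl, hvn, rfl⟩
  | succ r _ ih =>
    obtain ⟨u, hvu, hun, hu⟩ := ih (by omega)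
    obtain ⟨i, -, hi⟩ := exists_lt_of_sum_lt (hu ▸ hrn : ∑ i, u i < ∑ i, n i)
    refine ⟨u + Pi.single i 1, hvu.trans fun j => Nat.le_add_right _ _, fun j => ?_, ?_⟩
    · rcases eq_or_ne j i with rfl | hj
      · simpa using hi
      · simpa [hj] using hun j
    · simp [sum_add_distrib, hu]

theorem exponent_add_min_le {s n m : ℕ} (hsn : s ≤ n) (hnm : n ≤ m) :
    s * (n - s) + m * s + min (2 * s) n ≤ m * min (2 * s) n + s := by
  obtain ⟨d, rfl⟩ := Nat.exists_eq_add_of_le hsn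
  rw [Nat.add_sub_cancel_left]
  rcases le_total s d with h | h
  · rw [min_eq_left (by omega)]
    nlinarith [Nat.le_mul_self s]
  · rw [min_eq_right (by omega)]
    nlinarith [Nat.le_mul_self d]

theorem exists_sum_exponent_lt [DecidableEq ι] {n m s : ι → ℕ} (hnm : n ≤ m) (hsn : s ≤ n)
    {r : ℕ} (hr : 1 ≤ r) (hrn : r ≤ ∑ i, n i) (hsr : 2 * ∑ i, s i ≤ r) :
    ∃ u : ι → ℕ, u ≤ n ∧ ∑ i, u i = r ∧
      ∑ i, (s i * (n i - s i) + m i * s i) < ∑ i, m i * u i := by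
  set v : ι → ℕ := fun i => min (2 * s i) (n i)
  have hvr : ∑ i, v i ≤ r :=
    (sum_le_sum fun i _ => min_le_left _ _).trans (by rw [← mul_sum]; exact hsr)
  obtain ⟨u, hvu, hun, hu⟩ := exists_le_le_sum_eq (v := v) (fun i => min_le_right _ _) hvr hrn
  refine ⟨u, hun, hu, ?_⟩
  have hE : ∑ i, (s i * (n i - s i) + m i * s i) + ∑ i, v i ≤ ∑ i, m i * v i + ∑ i, s i := by
    simp only [← sum_add_distrib]
    exact sum_le_sum fun i _ => exponent_add_min_le (hsn i) (hnm i)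
  have hmu : ∑ i, m i * v i + (r - ∑ i, v i) ≤ ∑ i, m i * u i := by
    rw [← hu, ← sum_tsub_distrib _ fun i _ => hvu i, ← sum_add_distrib]
    refine sum_le_sum fun i _ => ?_
    obtain ⟨e, he⟩ := Nat.exists_eq_add_of_le (hvu i)
    have hem : e ≤ m i := by have : u i ≤ m i := (hun i).trans (hnm i); omega
    rw [he, Nat.add_sub_cancel_left]
    nlinarith [Nat.le_mul_self e]
  omega

end AnticodeExponent

theorem ball_lt_anticode_large_q_general {t : ℕ} (n m : Fin t → ℕ)
    (hnm : ∀ i, n i ≤ m i)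
    (r : ℕ) (hr1 : 1 ≤ r) (hrN : r ≤ ∑ i, n i)
    (K : ℕ)
    (hK : K = sSup {k : ℕ | ∃ u : Fin t → ℕ,
      (∀ i, u i ≤ n i) ∧ (∑ i, u i = r) ∧ k = ∑ i, m i * u i}) :
    ∃ Q : ℕ, ∀ (F : Type) [Field F] [Fintype F], Q ≤ Fintype.card F →
      (∑ k ∈ range (r / 2 + 1),
          ∑ s ∈ univ.filter (fun s : (i : Fin t) → Fin (n i + 1) => ∑ i, (s i : ℕ) = k),
            ∏ i, gbinom F (n i) (s i) *
              ∏ j ∈ range (s i), (Fintype.card F ^ m i - Fintype.card F ^ j))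
        < Fintype.card F ^ K := by
  classical
  have le_K (u : Fin t → ℕ) (hun : u ≤ n) (hu : ∑ i, u i = r) : ∑ i, m i * u i ≤ K := by
    refine hK ▸ le_csSup ⟨∑ i, m i * n i, ?_⟩ ⟨u, hun, hu, rfl⟩
    rintro _ ⟨w, hwn, -, rfl⟩
    exact sum_le_sum fun i _ => Nat.mul_le_mul_left _ (hwn i)
  set S := univ.filter fun s : (i : Fin t) → Fin (n i + 1) => ∑ i, (s i : ℕ) ∈ range (r / 2 + 1)
  refine ⟨Fintype.card ((i : Fin t) → Fin (n i + 1)) * 2 ^ (∑ i, n i) + 1, fun F _ _ hQ => ?_⟩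
  set q := Fintype.card F
  have term_mul_le (s) (hs : s ∈ S) :
      (∏ i, gbinom F (n i) (s i) * ∏ j ∈ range (s i), (q ^ m i - q ^ j)) * q
        ≤ 2 ^ (∑ i, n i) * q ^ K := by
    have hsr : 2 * ∑ i, (s i : ℕ) ≤ r := by simp only [S, mem_filter, mem_univ, true_and, mem_range] at hs; omega
    have hsn : (fun i => (s i : ℕ)) ≤ n := fun i => Nat.lt_succ_iff.mp (s i).isLt
    obtain ⟨u, hun, hu, hlt⟩ := exists_sum_exponent_lt hnm hsn hr1 hrN hsr
    calc _ ≤ 2 ^ (∑ i, n i) * q ^ (∑ i, ((s i : ℕ) * (n i - s i) + m i * s i)) * q :=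
          Nat.mul_le_mul_right _ (prod_gbinom_mul_prod_sub_le F hsn m)
      _ ≤ 2 ^ (∑ i, n i) * q ^ K := by
          rw [mul_assoc, ← pow_succ]
          gcongr
          · exact Fintype.card_pos
          · exact hlt.trans_le (le_K u hun hu)
  refine Nat.lt_of_mul_lt_mul_right (a := q) ?_
  calc _ = ∑ s ∈ S, (∏ i, gbinom F (n i) (s i) * ∏ j ∈ range (s i), (q ^ m i - q ^ j)) * q := by
        rw [sum_fiberwise_eq_sum_filter, sum_mul]
    _ ≤ #S * (2 ^ (∑ i, n i) * q ^ K) := sum_le_card_nsmul _ _ _ term_mul_le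
    _ ≤ Fintype.card ((i : Fin t) → Fin (n i + 1)) * 2 ^ (∑ i, n i) * q ^ K := by
        rw [← mul_assoc]; gcongr; exact card_le_univ S
    _ < q * q ^ K := by gcongr; omega
    _ = q ^ K * q := mul_comm _ _

/-- For fixed block sizes n_i ≤ m_i, let K = max{Σ m_i u_i : u_i ≤ n_i, Σ u_i = r} be
the maximal dimension of a linear r-anticode, and ρ = ⌊r/2⌋. For all sufficiently
large field sizes q, the cardinality V_ρ of the sum-rank ball of radius ρ is strictly
smaller than q^K, the size of an optimal linear r-anticode. -/
theorem ball_lt_anticode_large_q {t : ℕ} (ht : 1 ≤ t) (n m : Fin t → ℕ)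
    (hn : ∀ i, 1 ≤ n i) (hnm : ∀ i, n i ≤ m i)
    (r : ℕ) (hr1 : 1 ≤ r) (hrN : r ≤ ∑ i, n i)
    (K : ℕ)
    (hK : K = sSup {k : ℕ | ∃ u : Fin t → ℕ,
      (∀ i, u i ≤ n i) ∧ (∑ i, u i = r) ∧ k = ∑ i, m i * u i}) :
    ∃ Q : ℕ, ∀ (F : Type) [Field F] [Fintype F], Q ≤ Fintype.card F →
      (∑ k ∈ range (r / 2 + 1),
          ∑ s ∈ univ.filter (fun s : (i : Fin t) → Fin (n i + 1) => ∑ i, (s i : ℕ) = k),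
            ∏ i, gbinom F (n i) (s i) *
              ∏ j ∈ range (s i), (Fintype.card F ^ m i - Fintype.card F ^ j))
        < Fintype.card F ^ K :=
  ball_lt_anticode_large_q_general n m hnm r hr1 hrN K hK
end
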